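/- Let n ≥ 1 be an integer. Then every monic real polynomial P of degree n satisfies ∫_{−1}^1 |P(t)| dt ≥ 2^{1−n}, with equality for P = 2^{−n}·U_n, where U_n is the n-th Chebyshev polynomial of the second kind. In particular, the minimum of ∫_{−1}^1 |P(t)| dt over monic real polynomials of degree n equals 2^{1−n}. -/

import Mathlib

open Set Polynomial Nat MeasureTheory ENNReal

/-- `fd 0` belongs to `𝒟ⁿ([a,b])`, with `fd k` its `k`-th derivative: `fd k` exists and is
continuous on `[a,b]` for `0 ≤ k ≤ n-1`, and `fd n` is the derivative of `fd (n-1)` on `(a,b)`. -/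
def IsDn (n : ℕ) (a b : ℝ) (fd : ℕ → ℝ → ℝ) : Prop :=
  (∀ k, k + 1 < n → ∀ x ∈ Set.Icc a b, HasDerivWithinAt (fd k) (fd (k + 1) x) (Set.Icc a b) x) ∧
  ContinuousOn (fd (n - 1)) (Set.Icc a b) ∧
  (∀ x ∈ Set.Ioo a b, HasDerivAt (fd (n - 1)) (fd n x) x)

/-- `m_n(f) = inf_{a<t<b} |f^{(n)}(t)|`. -/
noncomputable def mIoo (n : ℕ) (a b : ℝ) (fd : ℕ → ℝ → ℝ) : ℝ :=
  sInf ((fun t => |fd n t|) '' Set.Ioo a b)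

/-- `‖f‖_{p,[a,b]}` for `0 < p < ∞`. -/
noncomputable def Lp (p a b : ℝ) (f : ℝ → ℝ) : ℝ :=
  (∫ t in a..b, |f t| ^ p) ^ (1 / p)

/-- `‖f‖_{∞,[a,b]}`. -/
noncomputable def Lsup (a b : ℝ) (f : ℝ → ℝ) : ℝ :=
  sSup ((fun t => |f t|) '' Set.Icc a b)

/-- `‖f‖_{p,[a,b]}` for `0 < p ≤ ∞`. -/
noncomputable def pnorm (p : ℝ≥0∞) (a b : ℝ) (f : ℝ → ℝ) : ℝ :=
  if p = ⊤ then Lsup a b f else Lp p.toReal a b f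

/-- `D**(n,p,[a,b])`, `p` finite. -/
noncomputable def Dstar (n : ℕ) (p a b : ℝ) : ℝ :=
  sInf { c | ∃ Q : Polynomial ℝ, Q.Monic ∧ Q.natDegree = n ∧ c = Lp p a b (fun x => Q.eval x) }

/-- `D**(n,∞,[a,b])`. -/
noncomputable def DstarInf (n : ℕ) (a b : ℝ) : ℝ :=
  sInf { c | ∃ Q : Polynomial ℝ, Q.Monic ∧ Q.natDegree = n ∧ c = Lsup a b (fun x => Q.eval x) }

/-- `C(n,p)`, `p` finite. -/
noncomputable def Cnp (n : ℕ) (p : ℝ) : ℝ :=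
  sSup { c | ∃ fd : ℕ → ℝ → ℝ, IsDn n 0 1 fd ∧ (∃ x ∈ Set.Icc (0:ℝ) 1, fd 0 x ≠ 0) ∧
    c = mIoo n 0 1 fd / Lp p 0 1 (fd 0) }

/-- `C(n,∞)`. -/
noncomputable def CnpInf (n : ℕ) : ℝ :=
  sSup { c | ∃ fd : ℕ → ℝ → ℝ, IsDn n 0 1 fd ∧ (∃ x ∈ Set.Icc (0:ℝ) 1, fd 0 x ≠ 0) ∧
    c = mIoo n 0 1 fd / Lsup 0 1 (fd 0) }

/-!
Put `s = sign ∘ Uₙ` on `[-1, 1]`. Substituting `t = cos θ` and using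
`Uⱼ(cos θ) sin θ = sin ((j + 1) θ)`, the integral `∫ Uⱼ s` becomes
`∫₀^π sin ((j + 1) θ) sign (sin ((n + 1) θ)) dθ`, an alternating sum over the intervals
`[kπ/(n+1), (k+1)π/(n+1)]` which telescopes to `0` for `j < n`. So `s` is orthogonal to every
polynomial of degree `< n`, and a monic `P` of degree `n` differs from `2⁻ⁿ Uₙ` by such a
polynomial, whence `∫ |P| ≥ ∫ P s = 2⁻ⁿ ∫ |Uₙ| = 2⁻ⁿ ∫₀^π |sin ((n + 1) θ)| dθ = 2¹⁻ⁿ`.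
-/

open Real hiding sign
open intervalIntegral Polynomial.Chebyshev

lemma measurable_coe_sign : Measurable fun x : ℝ => (SignType.sign x : ℝ) := by
  refine Monotone.measurable fun x y hxy => ?_
  have := SignType.sign.monotone hxy
  revert this
  cases SignType.sign x <;> cases SignType.sign y <;> simp

lemma abs_coe_sign_le_one (x : ℝ) : |(SignType.sign x : ℝ)| ≤ 1 := by
  cases SignType.sign x <;> simp

lemma IntervalIntegrable.mul_sign_comp {f g : ℝ → ℝ} {a b : ℝ}
    (hf : IntervalIntegrable f volume a b) (hg : Measurable g) :
    IntervalIntegrable (fun x => f x * SignType.sign (g x)) volume a b := by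
  rw [intervalIntegrable_iff] at hf ⊢
  exact hf.mul_bdd (measurable_coe_sign.comp hg).aestronglyMeasurable
    (ae_of_all _ fun x => abs_coe_sign_le_one (g x))

lemma integral_neg_one_one_eq_integral_comp_cos (g : ℝ → ℝ) :
    ∫ t in (-1)..1, g t = ∫ θ in 0..π, sin θ * g (cos θ) := by
  rw [integral_of_le (by norm_num), integral_of_le pi_pos.le,
    ← integral_Icc_eq_integral_Ioc, ← integral_Icc_eq_integral_Ioc, ← bijOn_cos.image_eq,
    integral_image_eq_integral_abs_deriv_smul measurableSet_Icc
      (fun x _ => (hasDerivAt_cos x).hasDerivWithinAt) injOn_cos g]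
  refine setIntegral_congr_fun measurableSet_Icc fun θ hθ => ?_
  rw [abs_neg, abs_of_nonneg (sin_nonneg_of_nonneg_of_le_pi hθ.1 hθ.2), smul_eq_mul]

lemma sign_sin_nat_mul_of_mem_Ioo {m j : ℕ} (hm : 0 < m) {θ : ℝ}
    (hθ : θ ∈ Ioo (j * π / m) ((j + 1) * π / m)) :
    (SignType.sign (sin (m * θ)) : ℝ) = (-1) ^ j := by
  have hm' : (0 : ℝ) < m := Nat.cast_pos.mpr hm
  have h₁ : j * π < m * θ := by rw [← div_lt_iff₀' hm']; exact hθ.1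
  have h₂ : m * θ < (j + 1) * π := by rw [← lt_div_iff₀' hm']; exact hθ.2
  have hpos : 0 < sin (m * θ - j * π) := sin_pos_of_pos_of_lt_pi (by linarith) (by linarith)
  rw [show m * θ = (m * θ - j * π) + j * π by ring, sin_add_nat_mul_pi, sign_mul, sign_pow,
    sign_pos hpos]
  simp

lemma integral_sin_mul_sign_sin_eq_sum {k : ℝ} (hk : k ≠ 0) {m : ℕ} (hm : 0 < m) :
    ∫ θ in 0..π, sin (k * θ) * SignType.sign (sin (m * θ)) =
      (∑ j ∈ Finset.range m, (-1) ^ j * (cos (j * (k * π / m)) - cos ((j + 1) * (k * π / m)))) /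
        k := by
  have hm' : (0 : ℝ) < m := Nat.cast_pos.mpr hm
  have hint : ∀ j < m, IntervalIntegrable (fun θ => sin (k * θ) * SignType.sign (sin (m * θ)))
      volume (j * π / m) ((j + 1 : ℕ) * π / m) := fun j _ =>
    (by fun_prop : Continuous fun θ => sin (k * θ)).intervalIntegrable _ _ |>.mul_sign_comp
      (by fun_prop)
  have hsplit := sum_integral_adjacent_intervals hint
  rw [Nat.cast_zero, zero_mul, zero_div, mul_div_cancel_left₀ π hm'.ne'] at hsplit
  rw [← hsplit, Finset.sum_div]
  refine Finset.sum_congr rfl fun j _ => ?_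
  have hle : j * π / m ≤ (j + 1 : ℕ) * π / m := by gcongr; simp
  rw [integral_of_le hle, integral_Ioc_eq_integral_Ioo,
    setIntegral_congr_fun measurableSet_Ioo (g := fun θ => (-1) ^ j * sin (k * θ))
      fun θ hθ => by
        rw [sign_sin_nat_mul_of_mem_Ioo hm (by exact_mod_cast hθ), mul_comm],
    ← integral_Ioc_eq_integral_Ioo, ← integral_of_le hle, intervalIntegral.integral_const_mul,
    integral_comp_mul_left (fun x => sin x) hk, integral_sin, smul_eq_mul]
  push_cast
  field_simp

lemma sum_neg_one_pow_mul_cos_sub_cos_eq_zero {x : ℝ} (hx : cos (x / 2) ≠ 0) {m : ℕ}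
    (hm : sin (m * x) = 0) :
    ∑ j ∈ Finset.range m, (-1) ^ j * (cos (j * x) - cos ((j + 1) * x)) = 0 := by
  obtain ⟨α, rfl⟩ : ∃ α, x = 2 * α := ⟨x / 2, by ring⟩
  rw [mul_div_cancel_left₀ α two_ne_zero] at hx
  -- `(cos a - cos (a + 2α)) cos α = sin α (sin a + sin (a + 2α))` makes the sum telescope
  have htele : ∀ j : ℕ, (-1) ^ j * (cos (j * (2 * α)) - cos ((j + 1) * (2 * α))) * cos α =
      (-1) ^ j * sin α * sin (j * (2 * α)) -
        (-1) ^ (j + 1) * sin α * sin ((j + 1 : ℕ) * (2 * α)) := by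
    intro j
    push_cast
    rw [add_mul, one_mul, cos_add, sin_add, cos_two_mul, sin_two_mul, pow_succ]
    linear_combination (-2 * (-1) ^ j * cos (j * (2 * α)) * cos α) * sin_sq_add_cos_sq α
  have hsum := Finset.sum_range_sub' (fun j => (-1) ^ j * sin α * sin (j * (2 * α))) m
  simp only [← htele, ← Finset.sum_mul, Nat.cast_zero, zero_mul, sin_zero, mul_zero, hm,
    sub_zero] at hsum
  exact (mul_eq_zero.mp hsum).resolve_right hx

lemma integral_sin_mul_sign_sin_of_lt {k m : ℕ} (hk : 0 < k) (hkm : k < m) :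
    ∫ θ in 0..π, sin (k * θ) * SignType.sign (sin (m * θ)) = 0 := by
  have hm : (0 : ℝ) < m := by exact_mod_cast hk.trans hkm
  have hcos : 0 < cos (k * π / m / 2) := by
    have : k * π / m < π := by
      rw [div_lt_iff₀ hm, mul_comm π]; gcongr
    apply cos_pos_of_mem_Ioo
    constructor <;> nlinarith [pi_pos, show (0 : ℝ) < k * π / m by positivity]
  rw [integral_sin_mul_sign_sin_eq_sum (by positivity) (hk.trans hkm),
    sum_neg_one_pow_mul_cos_sub_cos_eq_zero hcos.ne'
      (by rw [mul_div_cancel₀ _ hm.ne', sin_nat_mul_pi]), zero_div]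

lemma integral_abs_sin_nat_mul {m : ℕ} (hm : 0 < m) : ∫ θ in 0..π, |sin (m * θ)| = 2 := by
  have hm' : (0 : ℝ) < m := Nat.cast_pos.mpr hm
  simp_rw [← self_mul_sign (sin _)]
  rw [integral_sin_mul_sign_sin_eq_sum hm'.ne' hm, mul_div_cancel_left₀ π hm'.ne']
  have hterm : ∀ j : ℕ, (-1 : ℝ) ^ j * (cos (j * π) - cos ((j + 1) * π)) = 2 := fun j => by
    rw [add_mul, one_mul, cos_add_pi, cos_nat_mul_pi, sub_neg_eq_add, ← two_mul, mul_left_comm,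
      ← mul_pow, neg_one_mul, neg_neg, one_pow, mul_one]
  simp only [hterm, Finset.sum_const, Finset.card_range, nsmul_eq_mul]
  field_simp

noncomputable def Polynomial.Chebyshev.chebyshevUSequence (R : Type*) [CommRing R] [IsDomain R]
    [NeZero (2 : R)] : Polynomial.Sequence R where
  elems' n := U R n
  degree_eq' n := degree_U_natCast R n

lemma integral_mul_sign_eval_U_eq_integral_comp_cos (f : ℝ → ℝ) (n : ℕ) :
    ∫ t in (-1)..1, f t * SignType.sign ((U ℝ n).eval t) =
      ∫ θ in 0..π, f (cos θ) * sin θ * SignType.sign (sin ((n + 1) * θ)) := by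
  rw [integral_neg_one_one_eq_integral_comp_cos]
  refine integral_congr fun θ hθ => ?_
  rw [uIcc_of_le pi_pos.le] at hθ
  rcases (sin_nonneg_of_nonneg_of_le_pi hθ.1 hθ.2).eq_or_lt with hsin | hsin
  · simp [← hsin]
  · have hU := U_real_cos θ n
    push_cast at hU
    rw [← hU, sign_mul, sign_pos hsin, mul_one]
    ring

lemma integral_eval_U_mul_sign_eval_U_of_lt {j n : ℕ} (hjn : j < n) :
    ∫ t in (-1)..1, (U ℝ j).eval t * SignType.sign ((U ℝ n).eval t) = 0 := by
  have hU := fun θ => U_real_cos θ j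
  push_cast at hU
  rw [integral_mul_sign_eval_U_eq_integral_comp_cos, integral_congr fun θ _ => by rw [hU]]
  exact_mod_cast integral_sin_mul_sign_sin_of_lt (k := j + 1) (m := n + 1) j.succ_pos
    (by omega)

lemma integral_eval_mul_sign_eval_U_of_degree_lt {n : ℕ} {Q : ℝ[X]} (hQ : Q.degree < n) :
    ∫ t in (-1)..1, Q.eval t * SignType.sign ((U ℝ n).eval t) = 0 := by
  have hspan := (chebyshevUSequence ℝ).span_degreeLT (m := n) fun i _ => by
    show IsUnit (U ℝ i).leadingCoeff
    rw [leadingCoeff_U_natCast]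
    exact (pow_ne_zero i two_ne_zero).isUnit
  have hQ' : Q ∈ Submodule.span ℝ (chebyshevUSequence ℝ '' Iio n) := hspan ▸ mem_degreeLT.2 hQ
  clear hQ hspan
  have hint : ∀ p : ℝ[X],
      IntervalIntegrable (fun t => p.eval t * SignType.sign ((U ℝ n).eval t)) volume (-1) 1 :=
    fun p => (p.continuous.intervalIntegrable _ _).mul_sign_comp (U ℝ n).continuous.measurable
  induction hQ' using Submodule.span_induction with
  | mem p hp =>
    obtain ⟨j, hj, rfl⟩ := hp
    exact integral_eval_U_mul_sign_eval_U_of_lt hj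
  | zero => simp
  | add p q _ _ hp hq =>
    simp only [eval_add, add_mul]
    rw [integral_add (hint p) (hint q), hp, hq, add_zero]
  | smul c p _ hp =>
    simp only [eval_smul, smul_eq_mul, mul_assoc]
    rw [intervalIntegral.integral_const_mul, hp, mul_zero]

lemma integral_abs_eval_U (n : ℕ) : ∫ t in (-1)..1, |(U ℝ n).eval t| = 2 := by
  rw [integral_neg_one_one_eq_integral_comp_cos]
  have hU := fun θ => U_real_cos θ n
  push_cast at hU
  rw [integral_congr fun θ hθ => ?_]
  · simpa using integral_abs_sin_nat_mul (m := n + 1) n.succ_pos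
  rw [uIcc_of_le pi_pos.le] at hθ
  rw [← abs_of_nonneg (sin_nonneg_of_nonneg_of_le_pi hθ.1 hθ.2), ← abs_mul, mul_comm, hU]

lemma monic_two_zpow_neg_smul_U (n : ℕ) : ((2 : ℝ) ^ (-(n : ℤ)) • U ℝ n).Monic := by
  rw [Monic, smul_eq_C_mul, leadingCoeff_mul, leadingCoeff_C, leadingCoeff_U_natCast, zpow_neg,
    zpow_natCast, inv_mul_cancel₀ (by positivity)]

lemma natDegree_two_zpow_neg_smul_U (n : ℕ) : ((2 : ℝ) ^ (-(n : ℤ)) • U ℝ n).natDegree = n := by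
  rw [natDegree_smul _ (by positivity), natDegree_U_natCast]

lemma integral_abs_eval_two_zpow_neg_smul_U (n : ℕ) :
    ∫ t in (-1)..1, |((2 : ℝ) ^ (-(n : ℤ)) • U ℝ n).eval t| = 2 ^ (1 - (n : ℤ)) := by
  simp only [eval_smul, smul_eq_mul, abs_mul, abs_of_pos (by positivity : (0 : ℝ) < 2 ^ (-(n : ℤ)))]
  rw [intervalIntegral.integral_const_mul, integral_abs_eval_U, zpow_sub₀ two_ne_zero, zpow_neg,
    zpow_one, div_eq_inv_mul, mul_comm]

lemma integral_abs_eval_ge_of_monic {n : ℕ} {P : ℝ[X]} (hP : P.Monic) (hPn : P.natDegree = n) :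
    (2 : ℝ) ^ (1 - (n : ℤ)) ≤ ∫ t in (-1)..1, |P.eval t| := by
  set V : ℝ[X] := (2 : ℝ) ^ (-(n : ℤ)) • U ℝ n
  set s : ℝ → ℝ := fun t => SignType.sign ((U ℝ n).eval t)
  have hV := monic_two_zpow_neg_smul_U n
  have hdeg : (P - V).degree < n := by
    have hPdeg : P.degree = n := by rw [degree_eq_natDegree hP.ne_zero, hPn]
    have hVdeg : V.degree = n := by
      rw [degree_eq_natDegree hV.ne_zero, natDegree_two_zpow_neg_smul_U]
    simpa [hPdeg] using degree_sub_lt_left (hPdeg.trans hVdeg.symm) hP.ne_zero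
      (by rw [hP.leadingCoeff, hV.leadingCoeff])
  have hVs : ∀ t, V.eval t * s t = |V.eval t| := fun t => by
    simp only [V, s, eval_smul, smul_eq_mul, abs_mul, mul_assoc, self_mul_sign,
      abs_of_pos (by positivity : (0 : ℝ) < 2 ^ (-(n : ℤ)))]
  have hint : ∀ p : ℝ[X], IntervalIntegrable (fun t => p.eval t * s t) volume (-1) 1 :=
    fun p => (p.continuous.intervalIntegrable _ _).mul_sign_comp (U ℝ n).continuous.measurable
  calc (2 : ℝ) ^ (1 - (n : ℤ)) = ∫ t in (-1)..1, V.eval t * s t := by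
        simp only [hVs, V, integral_abs_eval_two_zpow_neg_smul_U]
    _ = (∫ t in (-1)..1, (P - V).eval t * s t) + ∫ t in (-1)..1, V.eval t * s t := by
        rw [integral_eval_mul_sign_eval_U_of_degree_lt hdeg, zero_add]
    _ = ∫ t in (-1)..1, P.eval t * s t := by
        rw [← integral_add (hint _) (hint _)]
        congr 1 with t
        rw [eval_sub]
        ring
    _ ≤ ∫ t in (-1)..1, |P.eval t| := by
        refine integral_mono_on (by norm_num) (hint P) (P.continuous.abs.intervalIntegrable _ _)
          fun t _ => ?_
        calc P.eval t * s t ≤ |P.eval t * s t| := le_abs_self _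
          _ ≤ |P.eval t| := by
            rw [abs_mul]; exact mul_le_of_le_one_right (abs_nonneg _) (abs_coe_sign_le_one _)

theorem stmt12_general (n : ℕ) :
    (∀ P : Polynomial ℝ, P.Monic → P.natDegree = n →
      (2:ℝ) ^ (1 - (n:ℤ)) ≤ ∫ t in (-1:ℝ)..1, |P.eval t|) ∧
    ((2:ℝ) ^ (-(n:ℤ)) • Polynomial.Chebyshev.U ℝ n).Monic ∧
    ((2:ℝ) ^ (-(n:ℤ)) • Polynomial.Chebyshev.U ℝ n).natDegree = n ∧
    (∫ t in (-1:ℝ)..1, |((2:ℝ) ^ (-(n:ℤ)) • Polynomial.Chebyshev.U ℝ n).eval t|) =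
      (2:ℝ) ^ (1 - (n:ℤ)) ∧
    sInf { c | ∃ P : Polynomial ℝ, P.Monic ∧ P.natDegree = n ∧
        c = ∫ t in (-1:ℝ)..1, |P.eval t| } = (2:ℝ) ^ (1 - (n:ℤ)) := by
  refine ⟨fun P hP hPn => integral_abs_eval_ge_of_monic hP hPn, monic_two_zpow_neg_smul_U n,
    natDegree_two_zpow_neg_smul_U n, integral_abs_eval_two_zpow_neg_smul_U n, ?_⟩
  refine IsLeast.csInf_eq ⟨⟨_, monic_two_zpow_neg_smul_U n, natDegree_two_zpow_neg_smul_U n,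
    (integral_abs_eval_two_zpow_neg_smul_U n).symm⟩, ?_⟩
  rintro c ⟨P, hP, hPn, rfl⟩
  exact integral_abs_eval_ge_of_monic hP hPn

/-- Every monic polynomial `P` of degree `n ≥ 1` satisfies `∫_{-1}^1 |P(t)| dt ≥ 2^{1-n}`, with
equality for `P = 2^{-n} Uₙ` (`Uₙ` the `n`-th Chebyshev polynomial of the second kind), which is
monic of degree `n`; in particular the minimum of `∫_{-1}^1 |P(t)| dt` equals `2^{1-n}`. -/
theorem stmt12 (n : ℕ) (hn : 1 ≤ n) :
    (∀ P : Polynomial ℝ, P.Monic → P.natDegree = n →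
      (2:ℝ) ^ (1 - (n:ℤ)) ≤ ∫ t in (-1:ℝ)..1, |P.eval t|) ∧
    ((2:ℝ) ^ (-(n:ℤ)) • Polynomial.Chebyshev.U ℝ n).Monic ∧
    ((2:ℝ) ^ (-(n:ℤ)) • Polynomial.Chebyshev.U ℝ n).natDegree = n ∧
    (∫ t in (-1:ℝ)..1, |((2:ℝ) ^ (-(n:ℤ)) • Polynomial.Chebyshev.U ℝ n).eval t|) =
      (2:ℝ) ^ (1 - (n:ℤ)) ∧
    sInf { c | ∃ P : Polynomial ℝ, P.Monic ∧ P.natDegree = n ∧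
        c = ∫ t in (-1:ℝ)..1, |P.eval t| } = (2:ℝ) ^ (1 - (n:ℤ)) :=
  stmt12_general n
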